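/- arXiv:2408.07328 — 5 statements merged into one kernel-verified Lean document; each statement's English description precedes it below -/
import Mathlib

section
/- Let R be a Dedekind domain with fraction field F, and let M be an R-module such that F ⊗_R M is a finite-dimensional F-vector space. Then the dual module M^∨ = Hom_R(M, R) is a finitely generated projective (equivalently, locally free) R-module. -/
open TensorProduct

/-- Localizing a torsion-free module over a domain at a submonoid not containing `0`
yields a torsion-free module. -/
private lemma localizedModule_noZeroSMulDivisors {R : Type*} [CommRing R] [IsDomain R]
    (S : Submonoid R) (hS : (0 : R) ∉ S)
    {N : Type*} [AddCommGroup N] [Module R N] [NoZeroSMulDivisors R N] :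
    NoZeroSMulDivisors (Localization S) (LocalizedModule S N) := by
  constructor
  intro c x hcx
  induction c using Localization.induction_on with
  | H y =>
    obtain ⟨r, s⟩ := y
    induction x using LocalizedModule.induction_on with
    | h n t =>
      rw [LocalizedModule.mk_smul_mk] at hcx
      rw [← LocalizedModule.zero_mk (1 : S), LocalizedModule.mk_eq] at hcx
      obtain ⟨u, hu⟩ := hcx
      simp only [one_smul, smul_zero] at hu
      have h0 : ((u : R) * r) • n = 0 := by
        rw [mul_smul]
        exact_mod_cast hu
      rcases smul_eq_zero.mp h0 with h | h
      · rcases mul_eq_zero.mp h with h' | h'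
        · exact absurd (h' ▸ u.2) hS
        · left; rw [h']; exact Localization.mk_zero s
      · right; rw [h, LocalizedModule.zero_mk]

/-- **Duals of generically finite modules over Dedekind domains are finite locally free.**
Let `R` be a Dedekind domain with fraction field `F`, and `M` an `R`-module such that
`F ⊗_R M` is a finite-dimensional `F`-vector space.  Then `M^∨ = Hom_R(M,R)` is a finitely
generated projective (equivalently, locally free) `R`-module. -/
theorem dual_finite_projective_of_dedekind
    (R : Type*) [CommRing R] [IsDomain R] [IsDedekindDomain R]
    (M : Type*) [AddCommGroup M] [Module R M]
    (h : FiniteDimensional (FractionRing R) (TensorProduct R (FractionRing R) M)) :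
    Module.Finite R (Module.Dual R M) ∧ Module.Projective R (Module.Dual R M) := by
  classical
  set F := FractionRing R with hF
  set Sset : Set (F ⊗[R] M) := Set.range fun m : M => (1 : F) ⊗ₜ[R] m with hSset
  have hspan : Submodule.span F Sset = ⊤ := by
    rw [eq_top_iff]
    rintro x -
    induction x using TensorProduct.induction_on with
    | zero => exact zero_mem _
    | tmul f m =>
      have hfm : f ⊗ₜ[R] m = f • ((1 : F) ⊗ₜ[R] m) := by
        rw [smul_tmul', smul_eq_mul, mul_one]
      rw [hfm]
      exact Submodule.smul_mem _ _ (Submodule.subset_span ⟨m, rfl⟩)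
    | add x y hx hy => exact add_mem hx hy
  -- extract a finite spanning subset of `Sset`
  obtain ⟨t, ht⟩ : (⊤ : Submodule F (F ⊗[R] M)).FG := h.fg_top
  have key : ∀ v : F ⊗[R] M, ∃ T : Finset (F ⊗[R] M),
      ↑T ⊆ Sset ∧ v ∈ Submodule.span F (↑T : Set (F ⊗[R] M)) := fun v =>
    Submodule.mem_span_finite_of_mem_span (by rw [hspan]; trivial)
  choose Tf hTf1 hTf2 using key
  set T : Finset (F ⊗[R] M) := t.biUnion Tf with hTdef
  have hTsub : (↑T : Set (F ⊗[R] M)) ⊆ Sset := by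
    intro x hx
    obtain ⟨v, _, hxv⟩ := Finset.mem_biUnion.mp hx
    exact hTf1 v hxv
  have hTspan : Submodule.span F (↑T : Set (F ⊗[R] M)) = ⊤ := by
    rw [eq_top_iff, ← ht, Submodule.span_le]
    intro v hv
    exact Submodule.span_mono (Finset.coe_subset.mpr (Finset.subset_biUnion_of_mem Tf hv))
      (hTf2 v)
  -- choose preimages in `M`
  have hpre : ∀ x : T, ∃ m : M, (1 : F) ⊗ₜ[R] m = (x : F ⊗[R] M) := fun x => hTsub x.2
  choose g hg using hpre
  -- the comparison map into a finite free module
  set f : Module.Dual R M →ₗ[R] (T → R) :=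
    LinearMap.pi (fun x : T => LinearMap.applyₗ (g x)) with hfdef
  have hfapp : ∀ (φ : Module.Dual R M) (x : T), f φ x = φ (g x) := fun φ x => rfl
  have hker : ∀ φ : Module.Dual R M, f φ = 0 → φ = 0 := by
    intro φ hφ0
    set ψ : F ⊗[R] M →ₗ[F] F :=
      (TensorProduct.AlgebraTensorModule.rid R F F).toLinearMap ∘ₗ
        LinearMap.baseChange F φ with hψdef
    have hψ1 : ∀ a : M, ψ ((1 : F) ⊗ₜ[R] a) = algebraMap R F (φ a) := by
      intro a
      simp [hψdef, TensorProduct.AlgebraTensorModule.rid_tmul,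
        Algebra.algebraMap_eq_smul_one]
    have hψT : ∀ x ∈ (↑T : Set (F ⊗[R] M)), x ∈ LinearMap.ker ψ := by
      intro x hx
      have hx2 : x = (1 : F) ⊗ₜ[R] g ⟨x, hx⟩ := (hg ⟨x, hx⟩).symm
      have hx' : ψ x = 0 := by
        rw [hx2, hψ1]
        have : φ (g ⟨x, hx⟩) = 0 := by
          rw [← hfapp φ ⟨x, hx⟩, hφ0]; rfl
        rw [this, map_zero]
      exact hx'
    have hψ : ψ = 0 := by
      rw [← LinearMap.ker_eq_top, eq_top_iff, ← hTspan, Submodule.span_le]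
      exact hψT
    ext a
    simp only [LinearMap.zero_apply]
    have h2 := hψ1 a
    rw [hψ, LinearMap.zero_apply] at h2
    exact (IsFractionRing.injective R F) (by rw [map_zero]; exact h2.symm)
  have hfinj : Function.Injective f := by
    intro φ₁ φ₂ heq
    have := hker (φ₁ - φ₂) (by rw [map_sub, heq, sub_self])
    exact sub_eq_zero.mp this
  -- finiteness
  have hfin : Module.Finite R (Module.Dual R M) :=
    haveI : IsNoetherian R (Module.Dual R M) := isNoetherian_of_injective f hfinj
    inferInstance
  -- torsion-freeness of the dual
  have hnz : NoZeroSMulDivisors R (Module.Dual R M) := by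
    constructor
    intro c φ hcφ
    by_cases hc : c = 0
    · exact Or.inl hc
    · refine Or.inr ?_
      ext a
      have := LinearMap.congr_fun hcφ a
      simp only [LinearMap.smul_apply, LinearMap.zero_apply, smul_eq_mul] at this
      exact (mul_eq_zero.mp this).resolve_left hc
  refine ⟨hfin, ?_⟩
  haveI := hfin
  haveI : Module.FinitePresentation R (Module.Dual R M) :=
    Module.finitePresentation_of_finite R _
  apply Module.projective_of_localization_maximal
  intro I hI
  haveI : NoZeroSMulDivisors (Localization.AtPrime I)
      (LocalizedModule I.primeCompl (Module.Dual R M)) :=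
    localizedModule_noZeroSMulDivisors I.primeCompl (fun h0 => h0 (I.zero_mem))
  haveI : Module.Finite (Localization.AtPrime I)
      (LocalizedModule I.primeCompl (Module.Dual R M)) :=
    Module.Finite.of_isLocalizedModule I.primeCompl
      (LocalizedModule.mkLinearMap I.primeCompl (Module.Dual R M))
  haveI : IsPrincipalIdealRing (Localization.AtPrime I) := by
    by_cases hbot : I = ⊥
    · have hfield : IsField R := by
        by_contra hnf
        exact Ring.ne_bot_of_isMaximal_of_not_isField hI hnf hbot
      letI := hfield.toField
      have hunits : I.primeCompl ≤ IsUnit.submonoid R := by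
        intro x hx
        have hx0 : x ≠ 0 := fun h0 => hx (h0 ▸ (hbot ▸ I.zero_mem : (0 : R) ∈ I))
        exact isUnit_iff_ne_zero.mpr hx0
      have e := IsLocalization.atUnits R I.primeCompl (S := Localization.AtPrime I) hunits
      exact IsPrincipalIdealRing.of_surjective e.toRingEquiv.toRingHom
        e.toRingEquiv.surjective
    · exact (IsLocalization.AtPrime.isDiscreteValuationRing_of_dedekind_domain R hbot
        (Localization.AtPrime I)).toIsPrincipalIdealRing
  haveI : Module.Free (Localization.AtPrime I)
      (LocalizedModule I.primeCompl (Module.Dual R M)) :=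
    Module.free_of_finite_type_torsion_free' (R := Localization.AtPrime I)
      (M := LocalizedModule I.primeCompl (Module.Dual R M))
  infer_instance
end

section
/- Let (R,τ) be a difference ring where R is an integral domain with fraction field F (with τ extended to F). Let (N,τ_N) be a difference module over R, locally free of finite rank as R-module, such that τ_N(N) generates N as an R-module. Then the difference structure on Hom_F(F⊗_R N, F) determined by the dual of F⊗_R N restricts to a difference structure on N^∨ = Hom_R(N,R) ⊆ Hom_F(F⊗_R N, F). -/
open TensorProduct

set_option maxHeartbeats 1000000 in
private lemma exists_dual_map_aux
    (R : Type*) [CommRing R] [IsDomain R] (τ : R →+* R)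
    (τF : FractionRing R →+* FractionRing R)
    (hτF : ∀ x : R, τF (algebraMap R (FractionRing R) x) = algebraMap R (FractionRing R) (τ x))
    (N : Type*) [AddCommGroup N] [Module R N]
    [Module.Finite R N]
    (τN : N →+ N) (hτN : ∀ (x : R) (n : N), τN (x • n) = τ x • τN n)
    (hgen : Submodule.span R (Set.range τN) = ⊤)
    (f : Module.Dual R N) :
    ∃ g : Module.Dual R N, ∀ n, g (τN n) = τ (f n) := by
  classical
  set F := FractionRing R
  -- the semilinear extension of τN to M := F ⊗[R] N
  have key : ∀ (c : F) (r : R), τF (r • c) = τ r • τF c := by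
    intro c r
    rw [Algebra.smul_def, map_mul, hτF, Algebra.smul_def]
  let inner : F →+ (N →+ F ⊗[R] N) :=
    { toFun := fun c => ((TensorProduct.mk R F N (τF c)).toAddMonoidHom).comp τN
      map_zero' := by ext n; simp
      map_add' := by intro a b; ext n; simp [add_tmul] }
  have hbal : ∀ (r : R) (c : F) (n : N), inner (r • c) n = inner c (r • n) := by
    intro r c n
    show τF (r • c) ⊗ₜ[R] τN n = τF c ⊗ₜ[R] τN (r • n)
    rw [key, hτN, smul_tmul]
  let τM : F ⊗[R] N →+ F ⊗[R] N := TensorProduct.liftAddHom inner hbal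
  have τM_tmul : ∀ (c : F) (n : N), τM (c ⊗ₜ[R] n) = τF c ⊗ₜ[R] τN n := by
    intro c n; simp [τM, inner]
  have hsemi : ∀ (x : F) (m : F ⊗[R] N), τM (x • m) = τF x • τM m := by
    intro x m
    induction m using TensorProduct.induction_on with
    | zero => simp
    | tmul c n => rw [smul_tmul', τM_tmul, τM_tmul, smul_tmul', smul_eq_mul, smul_eq_mul, map_mul]
    | add a b ha hb => rw [smul_add, map_add, ha, map_add, hb, smul_add]
  -- a basis of M
  let b : Module.Basis (Fin (Module.finrank F (F ⊗[R] N))) F (F ⊗[R] N) := Module.finBasis F (F ⊗[R] N)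
  have hmem : ∀ m : F ⊗[R] N,
      τM m ∈ Submodule.span F (Set.range fun j => τM (b j)) := by
    intro m
    rw [← b.sum_repr m, map_sum]
    refine Submodule.sum_mem _ fun j _ => ?_
    rw [hsemi]
    exact Submodule.smul_mem _ _ (Submodule.subset_span ⟨j, rfl⟩)
  have htop : ⊤ ≤ Submodule.span F (Set.range fun j => τM (b j)) := by
    intro m _
    have h1 : ∀ n : N, ((1 : F) ⊗ₜ[R] n) ∈
        Submodule.span F (Set.range fun j => τM (b j)) := by
      intro n
      have hn : n ∈ Submodule.span R (Set.range τN) := hgen ▸ Submodule.mem_top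
      induction hn using Submodule.span_induction with
      | mem x hx =>
        obtain ⟨m', rfl⟩ := hx
        have : (1 : F) ⊗ₜ[R] τN m' = τM ((1:F) ⊗ₜ[R] m') := by rw [τM_tmul, map_one]
        rw [this]; exact hmem _
      | zero => simp
      | add x y _ _ hx hy => rw [tmul_add]; exact Submodule.add_mem _ hx hy
      | smul r x _ hx =>
        rw [tmul_smul, ← algebraMap_smul F r ((1:F) ⊗ₜ[R] x)]
        exact Submodule.smul_mem _ _ hx
    induction m using TensorProduct.induction_on with
    | zero => simp
    | tmul c n =>
      have : c ⊗ₜ[R] n = c • ((1:F) ⊗ₜ[R] n) := by rw [smul_tmul', smul_eq_mul, mul_one]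
      rw [this]; exact Submodule.smul_mem _ _ (h1 n)
    | add a c ha hc => exact Submodule.add_mem _ (ha Submodule.mem_top) (hc Submodule.mem_top)
  let b' : Module.Basis (Fin (Module.finrank F (F ⊗[R] N))) F (F ⊗[R] N) :=
    basisOfTopLeSpanOfCardEqFinrank (fun j => τM (b j)) htop (by simp)
  have hb' : ∀ j, b' j = τM (b j) := fun j => by
    rw [coe_basisOfTopLeSpanOfCardEqFinrank]
  -- extension of f to M
  let fF : F ⊗[R] N →ₗ[F] F :=
    LinearMap.liftBaseChange F ((Algebra.linearMap R F).comp f)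
  have fF_tmul : ∀ n : N, fF ((1:F) ⊗ₜ[R] n) = algebraMap R F (f n) := by
    intro n; simp [fF]
  let gF : F ⊗[R] N →ₗ[F] F := b'.constr F fun j => τF (fF (b j))
  have hgF : ∀ m, gF (τM m) = τF (fF m) := by
    intro m
    have hm : τM m = ∑ j, τF (b.repr m j) • τM (b j) := by
      conv_lhs => rw [← b.sum_repr m]
      rw [map_sum]
      exact Finset.sum_congr rfl fun j _ => hsemi _ _
    rw [hm, map_sum]
    have h2 : ∀ j ∈ Finset.univ, gF (τF (b.repr m j) • τM (b j))
        = τF (b.repr m j • fF (b j)) := by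
      intro j _
      rw [map_smul, ← hb' j, Module.Basis.constr_basis, smul_eq_mul, smul_eq_mul, map_mul]
    rw [Finset.sum_congr rfl h2,
      ← map_sum τF (fun j => b.repr m j • fF (b j)) Finset.univ]
    congr 1
    conv_rhs => rw [← b.sum_repr m]
    rw [map_sum]
    exact Finset.sum_congr rfl fun j _ => (map_smul fF _ _).symm
  -- restrict to N
  let h : N →ₗ[R] F :=
    (gF.restrictScalars R).comp ((TensorProduct.mk R F N) 1)
  have hval : ∀ n, h (τN n) = algebraMap R F (τ (f n)) := by
    intro n
    have : h (τN n) = gF ((1:F) ⊗ₜ[R] τN n) := rfl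
    rw [this]
    have : (1 : F) ⊗ₜ[R] τN n = τM ((1:F) ⊗ₜ[R] n) := by rw [τM_tmul, map_one]
    rw [this, hgF, fF_tmul, hτF]
  have hrange : ∀ n, h n ∈ LinearMap.range (Algebra.linearMap R F) := by
    intro n
    have hn : n ∈ Submodule.span R (Set.range τN) := hgen ▸ Submodule.mem_top
    induction hn using Submodule.span_induction with
    | mem x hx =>
      obtain ⟨m', rfl⟩ := hx
      exact ⟨τ (f m'), (hval m').symm⟩
    | zero => simp
    | add x y _ _ hx hy => rw [map_add]; exact add_mem hx hy
    | smul r x _ hx => rw [map_smul]; exact Submodule.smul_mem _ _ hx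
  have hinj : Function.Injective (Algebra.linearMap R F) :=
    IsFractionRing.injective R F
  let e : R ≃ₗ[R] LinearMap.range (Algebra.linearMap R F) :=
    LinearEquiv.ofInjective _ hinj
  let g : N →ₗ[R] R := e.symm.toLinearMap.comp (h.codRestrict _ hrange)
  have hcomp : ∀ n, algebraMap R F (g n) = h n := by
    intro n
    have h1 : ((LinearEquiv.ofInjective (Algebra.linearMap R F) hinj (g n)) : F)
        = Algebra.linearMap R F (g n) :=
      LinearEquiv.ofInjective_apply _ _
    rw [Algebra.linearMap_apply] at h1
    rw [← h1]
    show ((e (e.symm ((h.codRestrict _ hrange) n))) : F) = h n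
    rw [LinearEquiv.apply_symm_apply]
    rfl
  refine ⟨g, fun n => ?_⟩
  apply hinj
  show algebraMap R F (g (τN n)) = algebraMap R F (τ (f n))
  rw [hcomp, hval]

/-- **Proposition (dual difference structure restricts to the integral dual).**
Let `(R,τ)` be a difference ring where `R` is an integral domain with fraction field `F`
(with `τ` extended to `F`), and `(N,τ_N)` a difference module over `R`, locally free of
finite rank (i.e. finitely generated projective), such that `τ_N(N)` generates `N` as an
`R`-module.  Then the difference structure on `Hom_F(F ⊗_R N, F)` determined by duality
restricts to a difference structure on `N^∨ = Hom_R(N, R)`:  there is a `τ`-semilinear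
additive endomorphism `τD` of `N^∨` compatible with the evaluation pairing, i.e.
`τD f (τ_N n) = τ (f n)` (this evaluation property is exactly what characterises the dual
difference structure on the dual of `F ⊗_R N`). -/
theorem differenceModule_dual_structure_restricts
    (R : Type*) [CommRing R] [IsDomain R] (τ : R →+* R)
    (τF : FractionRing R →+* FractionRing R)
    (hτF : ∀ x : R, τF (algebraMap R (FractionRing R) x) = algebraMap R (FractionRing R) (τ x))
    (N : Type*) [AddCommGroup N] [Module R N]
    [Module.Finite R N] [Module.Projective R N]
    (τN : N →+ N) (hτN : ∀ (x : R) (n : N), τN (x • n) = τ x • τN n)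
    (hgen : Submodule.span R (Set.range τN) = ⊤) :
    ∃ τD : Module.Dual R N →+ Module.Dual R N,
      (∀ (x : R) (f : Module.Dual R N), τD (x • f) = τ x • τD f) ∧
      (∀ (f : Module.Dual R N) (n : N), τD f (τN n) = τ (f n)) := by
  classical
  have exu : ∀ f : Module.Dual R N, ∃ g : Module.Dual R N, ∀ n, g (τN n) = τ (f n) :=
    fun f => exists_dual_map_aux R τ τF hτF N τN hτN hgen f
  have uniq : ∀ g₁ g₂ : Module.Dual R N, (∀ n, g₁ (τN n) = g₂ (τN n)) → g₁ = g₂ := by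
    intro g₁ g₂ hEq
    ext n
    have hn : n ∈ Submodule.span R (Set.range τN) := hgen ▸ Submodule.mem_top
    induction hn using Submodule.span_induction with
    | mem x hx => obtain ⟨m, rfl⟩ := hx; exact hEq m
    | zero => simp
    | add x y _ _ hx hy => rw [map_add, map_add, hx, hy]
    | smul r x _ hx => rw [map_smul, map_smul, hx]
  choose G hG using exu
  have hadd : ∀ f f', G (f + f') = G f + G f' := by
    intro f f'
    apply uniq
    intro n
    rw [hG]
    show _ = G f (τN n) + G f' (τN n)
    rw [hG, hG, LinearMap.add_apply, map_add]
  refine ⟨AddMonoidHom.mk' G hadd, ?_, fun f n => hG f n⟩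
  intro x f
  show G (x • f) = τ x • G f
  apply uniq
  intro n
  rw [hG]
  show τ ((x • f) n) = τ x * G f (τN n)
  rw [hG, LinearMap.smul_apply, smul_eq_mul, map_mul]
end

section
/- Let C∞ be a complete algebraically closed nonarchimedean valued field extension of Fq, and let T = A ⊗̂ C∞ be the Tate algebra completion of A ⊗_{Fq} C∞ with respect to the Gauss norm, where A is an Fq-algebra that is a Dedekind domain with finite-dimensional graded pieces. Then the Fq[t]-linear (more precisely A-linear) map Δ: T → T, x ↦ x − τ(x), where τ(a ⊗ c) = a ⊗ c^q extended continuously, is surjective with kernel equal to A (the τ-invariants of T). -/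
section Aux

variable {Cinf : Type*}

lemma myNormSubLeMax {E : Type*} [SeminormedAddCommGroup E] [IsUltrametricDist E] (a b : E) :
    ‖a - b‖ ≤ max ‖a‖ ‖b‖ := by
  rw [sub_eq_add_neg]
  simpa using IsUltrametricDist.norm_add_le_max a (-b)

lemma myNatDegXPowSubX [Field Cinf] {q : ℕ} (hq : 1 < q) :
    (Polynomial.X ^ q - Polynomial.X : Polynomial Cinf).natDegree = q := by
  compute_degree!
  · rw [if_neg (by omega : ¬1 = q)]
    norm_num
  · omega

/-- Existence of a root of `x - x^q = y` in an algebraically closed field. -/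
lemma myExistsRoot [Field Cinf] [IsAlgClosed Cinf] {q : ℕ} (hq : 1 < q) (y : Cinf) :
    ∃ x : Cinf, x - x ^ q = y := by
  have hq0 : q ≠ 0 := by omega
  have hdeg : (Polynomial.X ^ q - Polynomial.X + Polynomial.C y : Polynomial Cinf).natDegree
      = q := by
    compute_degree!
    · rw [if_neg (by omega : ¬1 = q), if_neg hq0]
      norm_num
    · omega
  have hdeg' : (Polynomial.X ^ q - Polynomial.X + Polynomial.C y : Polynomial Cinf).degree
      ≠ 0 := by
    intro h
    have h2 : (Polynomial.X ^ q - Polynomial.X + Polynomial.C y : Polynomial Cinf).natDegree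
        = 0 := Polynomial.natDegree_eq_zero_iff_degree_le_zero.mpr h.le
    omega
  obtain ⟨z, hz⟩ := IsAlgClosed.exists_root _ hdeg'
  refine ⟨z, ?_⟩
  rw [Polynomial.IsRoot] at hz
  simp only [Polynomial.eval_add, Polynomial.eval_sub, Polynomial.eval_pow, Polynomial.eval_X,
    Polynomial.eval_C] at hz
  linear_combination -hz

/-- For small `y` there is a small root, via the convergent series `∑ y^(q^n)`. -/
lemma mySmallRoot [NontriviallyNormedField Cinf] [CompleteSpace Cinf]
    [IsUltrametricDist Cinf] {q : ℕ} (hq : 1 < q)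
    (hadd : ∀ a b : Cinf, (a + b) ^ q = a ^ q + b ^ q)
    {y : Cinf} (hy : ‖y‖ < 1) :
    ∃ x : Cinf, x - x ^ q = y ∧ ‖x‖ ≤ ‖y‖ := by
  have hs : Summable fun n : ℕ => y ^ q ^ n := by
    refine Summable.of_norm_bounded (summable_geometric_of_lt_one (norm_nonneg y) hy) ?_
    intro n
    rw [norm_pow]
    exact pow_le_pow_of_le_one (norm_nonneg y) hy.le (Nat.lt_pow_self (n := n) hq).le
  have hxnorm : ‖∑' n : ℕ, y ^ q ^ n‖ ≤ ‖y‖ := by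
    refine IsUltrametricDist.norm_tsum_le_of_forall_le_of_nonneg (norm_nonneg y) ?_
    intro n
    rw [norm_pow]
    calc ‖y‖ ^ q ^ n ≤ ‖y‖ ^ 1 :=
          pow_le_pow_of_le_one (norm_nonneg y) hy.le (Nat.one_le_pow _ _ (by omega))
      _ = ‖y‖ := pow_one _
  have hgc : Continuous (AddMonoidHom.mk' (fun z : Cinf => z ^ q) hadd) :=
    continuous_pow q
  have hmap := (hs.hasSum.map (AddMonoidHom.mk' (fun z : Cinf => z ^ q) hadd) hgc).tsum_eq
  have hxq : (∑' n : ℕ, y ^ q ^ n) ^ q = ∑' n : ℕ, y ^ q ^ (n + 1) := by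
    rw [show (∑' n : ℕ, y ^ q ^ n) ^ q
        = AddMonoidHom.mk' (fun z : Cinf => z ^ q) hadd (∑' n : ℕ, y ^ q ^ n) from rfl,
      ← hmap]
    refine tsum_congr fun n => ?_
    show (y ^ q ^ n) ^ q = y ^ q ^ (n + 1)
    rw [← pow_mul, ← pow_succ]
  refine ⟨∑' n : ℕ, y ^ q ^ n, ?_, hxnorm⟩
  rw [hxq, Summable.tsum_eq_zero_add hs]
  simp

/-- Fixed points of the `q`-power Frobenius are exactly the image of `Fq`. -/
lemma myFixedPoints (Fq : Type*) [Field Fq] [Fintype Fq]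
    [Field Cinf] [Algebra Fq Cinf] {z : Cinf} (hz : z - z ^ Fintype.card Fq = 0) :
    ∃ a : Fq, z = algebraMap Fq Cinf a := by
  classical
  have hq : 1 < Fintype.card Fq := Fintype.one_lt_card
  have hdeg : (Polynomial.X ^ Fintype.card Fq - Polynomial.X : Polynomial Cinf).natDegree
      = Fintype.card Fq := myNatDegXPowSubX hq
  have hPne : (Polynomial.X ^ Fintype.card Fq - Polynomial.X : Polynomial Cinf) ≠ 0 := by
    intro h
    rw [h] at hdeg
    simp at hdeg
    omega
  have hFsub : Finset.univ.image (algebraMap Fq Cinf) ⊆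
      (Polynomial.X ^ Fintype.card Fq - Polynomial.X : Polynomial Cinf).roots.toFinset := by
    intro c hc
    rw [Finset.mem_image] at hc
    obtain ⟨a, _, rfl⟩ := hc
    rw [Multiset.mem_toFinset, Polynomial.mem_roots hPne, Polynomial.IsRoot]
    simp only [Polynomial.eval_sub, Polynomial.eval_pow, Polynomial.eval_X]
    rw [← map_pow, FiniteField.pow_card, sub_self]
  have hFcard : (Finset.univ.image (algebraMap Fq Cinf)).card = Fintype.card Fq := by
    rw [Finset.card_image_of_injective _ (algebraMap Fq Cinf).injective, Finset.card_univ]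
  have hroots :
      (Polynomial.X ^ Fintype.card Fq - Polynomial.X : Polynomial Cinf).roots.toFinset.card
      ≤ Fintype.card Fq := by
    calc (Polynomial.X ^ Fintype.card Fq - Polynomial.X : Polynomial Cinf).roots.toFinset.card
        ≤ Multiset.card
            (Polynomial.X ^ Fintype.card Fq - Polynomial.X : Polynomial Cinf).roots :=
          Multiset.toFinset_card_le _
      _ ≤ (Polynomial.X ^ Fintype.card Fq - Polynomial.X : Polynomial Cinf).natDegree :=
          Polynomial.card_roots' _
      _ = Fintype.card Fq := hdeg
  have heq :
      Finset.univ.image (algebraMap Fq Cinf)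
      = (Polynomial.X ^ Fintype.card Fq - Polynomial.X : Polynomial Cinf).roots.toFinset :=
    Finset.eq_of_subset_of_card_le hFsub (by rw [hFcard]; exact hroots)
  have hzmem : z ∈
      (Polynomial.X ^ Fintype.card Fq - Polynomial.X : Polynomial Cinf).roots.toFinset := by
    rw [Multiset.mem_toFinset, Polynomial.mem_roots hPne, Polynomial.IsRoot]
    simp only [Polynomial.eval_sub, Polynomial.eval_pow, Polynomial.eval_X]
    linear_combination -hz
  rw [← heq, Finset.mem_image] at hzmem
  obtain ⟨a, _, ha⟩ := hzmem
  exact ⟨a, ha.symm⟩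

/-- The `q`-power map is additive on an `Fq`-algebra. -/
lemma myFrobAdd (Fq : Type*) [Field Fq] [Fintype Fq]
    [Field Cinf] [Algebra Fq Cinf] (a b : Cinf) :
    (a + b) ^ Fintype.card Fq = a ^ Fintype.card Fq + b ^ Fintype.card Fq := by
  obtain ⟨k, hp, hcard⟩ := FiniteField.card Fq (ringChar Fq)
  haveI := Fact.mk hp
  haveI : CharP Cinf (ringChar Fq) :=
    charP_of_injective_algebraMap (algebraMap Fq Cinf).injective (ringChar Fq)
  rw [hcard]
  exact add_pow_char_pow a b (ringChar Fq) (k : ℕ)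

end Aux


/-- **Surjectivity of `Δ = 1 - τ` on the Tate algebra, with kernel `A`.**
Let `C∞` be a complete algebraically closed nonarchimedean valued field extension of the
finite field `Fq` (with `q` elements), and let `T = A ⊗̂ C∞` be the completion of
`A ⊗_{Fq} C∞` with respect to the Gauss norm.  We work in coordinates: fixing an `Fq`-basis
of `A` indexed by `ι` and graded by a degree function `deg : ι → ℕ` with finite fibres
(`A` has finite-dimensional graded pieces), elements of `T` are the coordinate families
`c : ι → C∞` with `|c_i| → 0`, i.e. with only finitely many coordinates of norm `≥ ε` for
every `ε > 0`; the twist `τ` fixes `A` and is the `q`-power Frobenius on `C∞`, so in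
coordinates `τ(c)_i = c_i^q`, and `Δ(x) = x - τ(x)` acts coordinatewise by `c ↦ c - c^q`.
Then `Δ` maps `T` to itself, is surjective, and its kernel is exactly `A = T^τ`: the
elements with finitely many nonzero coordinates, all lying in (the image of) `Fq`. -/
theorem tate_algebra_one_sub_frobenius_surjective_kernel_A
    (Fq : Type*) [Field Fq] [Fintype Fq]
    (Cinf : Type*) [NontriviallyNormedField Cinf] [CompleteSpace Cinf]
    [IsUltrametricDist Cinf] [IsAlgClosed Cinf] [Algebra Fq Cinf]
    (ι : Type*) (deg : ι → ℕ) (hdeg : ∀ n : ℕ, {i : ι | deg i = n}.Finite) :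
    -- `T` in coordinates:
    ∀ T : Set (ι → Cinf),
      T = {c : ι → Cinf | ∀ ε : ℝ, 0 < ε → {i : ι | ε ≤ ‖c i‖}.Finite} →
      -- `Δ` maps `T` into `T`:
      (∀ x ∈ T, (fun i => x i - x i ^ Fintype.card Fq) ∈ T) ∧
      -- `Δ : T → T` is surjective:
      (∀ y ∈ T, ∃ x ∈ T, (fun i => x i - x i ^ Fintype.card Fq) = y) ∧
      -- the kernel of `Δ` on `T` is `A`, the set of finitely supported `Fq`-valued families:
      (∀ x ∈ T, ((fun i => x i - x i ^ Fintype.card Fq) = 0 ↔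
        (Set.Finite {i : ι | x i ≠ 0} ∧ ∀ i, ∃ a : Fq, x i = algebraMap Fq Cinf a))) := by
  intro T hT
  subst hT
  have hq : 1 < Fintype.card Fq := Fintype.one_lt_card
  refine ⟨?_, ?_, ?_⟩
  · -- Δ maps T into T
    intro x hx ε hε
    refine (hx (min ε 1) (lt_min hε one_pos)).subset ?_
    intro i hi
    simp only [Set.mem_setOf_eq] at hi ⊢
    by_contra h
    push_neg at h
    have h1 : ‖x i‖ < 1 := lt_of_lt_of_le h (min_le_right _ _)
    have h2 : ‖x i‖ < ε := lt_of_lt_of_le h (min_le_left _ _)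
    have h3 : ‖x i ^ Fintype.card Fq‖ ≤ ‖x i‖ := by
      rw [norm_pow]
      exact pow_le_of_le_one (norm_nonneg _) h1.le (by omega)
    have := (myNormSubLeMax (x i) (x i ^ Fintype.card Fq)).trans (max_le le_rfl h3)
    exact absurd (hi.trans this) (not_le.mpr h2)
  · -- surjectivity
    intro y hy
    have hex : ∀ i : ι, ∃ x : Cinf,
        x - x ^ Fintype.card Fq = y i ∧ (‖y i‖ < 1 → ‖x‖ ≤ ‖y i‖) := by
      intro i
      by_cases h : ‖y i‖ < 1
      · obtain ⟨x, hx1, hx2⟩ := mySmallRoot hq (myFrobAdd Fq) h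
        exact ⟨x, hx1, fun _ => hx2⟩
      · obtain ⟨x, hx1⟩ := myExistsRoot hq (y i)
        exact ⟨x, hx1, fun h' => absurd h' h⟩
    choose x hx1 hx2 using hex
    refine ⟨x, ?_, funext hx1⟩
    intro ε hε
    refine ((hy 1 one_pos).union (hy ε hε)).subset ?_
    intro i hi
    simp only [Set.mem_setOf_eq, Set.mem_union] at hi ⊢
    by_cases h : ‖y i‖ < 1
    · exact Or.inr (hi.trans (hx2 i h))
    · exact Or.inl (not_lt.mp h)
  · -- kernel
    intro x hx
    constructor
    · intro h0
      have h := fun i => congrFun h0 i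
      simp only [Pi.zero_apply] at h
      constructor
      · refine (hx 1 one_pos).subset ?_
        intro i hi
        simp only [Set.mem_setOf_eq] at hi ⊢
        have heq : x i = x i ^ Fintype.card Fq := sub_eq_zero.mp (h i)
        have ht0 : (0 : ℝ) < ‖x i‖ := norm_pos_iff.mpr hi
        have htq : ‖x i‖ ^ Fintype.card Fq = ‖x i‖ := by
          rw [← norm_pow, ← heq]
        have h1 : ‖x i‖ ^ (Fintype.card Fq - 1) * ‖x i‖ = ‖x i‖ := by
          rw [← pow_succ]
          have : Fintype.card Fq - 1 + 1 = Fintype.card Fq := by omega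
          rw [this, htq]
        have h2 : ‖x i‖ ^ (Fintype.card Fq - 1) = 1 := by
          have := mul_right_cancel₀ (ne_of_gt ht0) (h1.trans (one_mul (‖x i‖)).symm)
          exact this
        have hne : Fintype.card Fq - 1 ≠ 0 := by omega
        rcases lt_trichotomy (‖x i‖) 1 with hlt | heq1 | hgt
        · exact absurd h2 (ne_of_lt (pow_lt_one₀ ht0.le hlt hne))
        · exact heq1.ge
        · exact le_of_lt hgt
      · exact fun i => myFixedPoints Fq (h i)
    · rintro ⟨hfin, hval⟩
      funext i
      obtain ⟨a, ha⟩ := hval i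
      simp only [Pi.zero_apply]
      rw [ha, ← map_pow, FiniteField.pow_card, sub_self]
end

section
/- Let A be the coordinate ring of a smooth projective geometrically irreducible Fq-curve minus a point, p a nonzero prime of A, and C∞ a complete algebraically closed field over Fq containing the fraction field of A. Then the natural ring homomorphism from the Tate algebra T = A ⊗̂ C∞ to the p-adic completion (A⊗C∞)_p = lim_n (A/p^{n+1}) ⊗ C∞ is injective. -/
lemma norm_algebraMap_finite_le_one
    (Fq : Type*) [Field Fq] [Fintype Fq]
    (Cinf : Type*) [NontriviallyNormedField Cinf] [Algebra Fq Cinf] (t : Fq) :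
    ‖algebraMap Fq Cinf t‖ ≤ 1 := by
  by_cases ht : t = 0
  · simp [ht]
  · have h1 : (algebraMap Fq Cinf t) ^ (Fintype.card Fq - 1) = 1 := by
      rw [← map_pow, FiniteField.pow_card_sub_one_eq_one t ht, map_one]
    by_contra h
    push_neg at h
    have hn : Fintype.card Fq - 1 ≠ 0 := by
      have := Fintype.one_lt_card (α := Fq)
      omega
    have := one_lt_pow₀ h hn
    rw [← norm_pow, h1, norm_one] at this
    exact lt_irrefl _ this

lemma summable_of_coeff_le
    {Cinf : Type*} [NontriviallyNormedField Cinf] [CompleteSpace Cinf]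
    [IsUltrametricDist Cinf] {ι : Type*} (c : ι → Cinf)
    (hc : ∀ ε : ℝ, 0 < ε → {i : ι | ε ≤ ‖c i‖}.Finite)
    (f : ι → Cinf) (hf : ∀ i, ‖f i‖ ≤ ‖c i‖) : Summable f := by
  rw [summable_iff_vanishing_norm]
  intro ε hε
  refine ⟨(hc (ε / 2) (by positivity)).toFinset, fun t ht => ?_⟩
  have : ‖∑ i ∈ t, f i‖ ≤ ε / 2 := by
    refine IsUltrametricDist.norm_sum_le_of_forall_le_of_nonneg (by positivity) fun i hi => ?_
    have hi' : i ∉ {i : ι | ε / 2 ≤ ‖c i‖} := by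
      intro hmem
      exact (Finset.disjoint_left.mp ht hi) (by simpa using hmem)
    simp only [Set.mem_setOf_eq, not_le] at hi'
    exact (hf i).trans hi'.le
  linarith

set_option maxHeartbeats 1000000 in
/-- **Injectivity of the Tate algebra in the `p`-adic completion.**
Let `A` be the coordinate ring of a smooth projective geometrically irreducible `Fq`-curve
minus a point (here: a Dedekind domain which is an `Fq`-algebra), `p` a nonzero prime of
`A`, and `C∞` a complete algebraically closed nonarchimedean valued field over `Fq`
containing the fraction field of `A`.  We work in coordinates with respect to an `Fq`-basis
`b` of `A` (indexed by `ι`) and `Fq`-bases `b' n` of the quotients `A/p^(n+1)` (indexed by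
`κ n`):  an element of `T = A ⊗̂ C∞` is a family `c : ι → C∞` tending to zero (Gauss-norm
convergence), and its image in `(A/p^(n+1)) ⊗ C∞` has `j`-th coordinate
`∑'_i (b' n).repr (b i mod p^(n+1)) j · c_i` (a convergent sum in `C∞`).
Then the natural ring homomorphism `T → (A ⊗ C∞)_p = lim_n (A/p^(n+1)) ⊗ C∞` is
injective: if all these coordinates vanish for every `n`, then `c = 0`. -/
theorem tate_algebra_to_p_adic_completion_injective
    (Fq : Type*) [Field Fq] [Fintype Fq]
    (A : Type*) [CommRing A] [IsDomain A] [IsDedekindDomain A] [Algebra Fq A]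
    (Cinf : Type*) [NontriviallyNormedField Cinf] [CompleteSpace Cinf]
    [IsUltrametricDist Cinf] [IsAlgClosed Cinf] [Algebra Fq Cinf]
    [Algebra A Cinf] [IsScalarTower Fq A Cinf]
    (hACinf : Function.Injective (algebraMap A Cinf))
    (p : Ideal A) (hp : p.IsPrime) (hp0 : p ≠ ⊥)
    (ι : Type*) (b : Module.Basis ι Fq A)
    (κ : ℕ → Type*) (b' : ∀ n : ℕ, Module.Basis (κ n) Fq (A ⧸ p ^ (n + 1))) :
    ∀ c : ι → Cinf,
      (∀ ε : ℝ, 0 < ε → {i : ι | ε ≤ ‖c i‖}.Finite) →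
      (∀ (n : ℕ) (j : κ n),
        (∑' i : ι,
          algebraMap Fq Cinf ((b' n).repr (Ideal.Quotient.mk (p ^ (n + 1)) (b i)) j) * c i)
          = 0) →
      c = 0 := by
  classical
  intro c hc hzero
  by_contra hne
  obtain ⟨i₀, hi₀⟩ : ∃ i, c i ≠ 0 := by
    by_contra h
    push_neg at h
    exact hne (funext h)
  have hi₀pos : 0 < ‖c i₀‖ := norm_pos_iff.mpr hi₀
  -- the maximum of the norms
  have hGfin := hc ‖c i₀‖ hi₀pos
  have hGne : i₀ ∈ hGfin.toFinset := by simp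
  obtain ⟨i₁, hi₁G, hi₁max⟩ :=
    hGfin.toFinset.exists_max_image (fun i => ‖c i‖) ⟨i₀, hGne⟩
  set M : ℝ := ‖c i₁‖ with hM
  have hi₀M : ‖c i₀‖ ≤ M := hi₁max i₀ hGne
  have hMpos : 0 < M := lt_of_lt_of_le hi₀pos hi₀M
  have hmax : ∀ i, ‖c i‖ ≤ M := by
    intro i
    by_cases hi : i ∈ hGfin.toFinset
    · exact hi₁max i hi
    · have : ¬ ‖c i₀‖ ≤ ‖c i‖ := by simpa using hi
      push_neg at this
      exact this.le.trans hi₀M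
  -- the set of indices achieving the maximum
  have hSfin := hc M hMpos
  set Sfin : Finset ι := hSfin.toFinset with hSfin_def
  have hi₁S : i₁ ∈ Sfin := by simp [hSfin_def, hM]
  have hmemS : ∀ i, i ∈ Sfin ↔ M ≤ ‖c i‖ := by
    intro i; simp [hSfin_def]
  -- second-largest bound M'
  have hHfin := hc (M / 2) (by positivity)
  set vals : Finset ℝ :=
    insert (M / 2) ((hHfin.toFinset \ Sfin).image fun i => ‖c i‖) with hvals
  have hvalsne : vals.Nonempty := ⟨M / 2, Finset.mem_insert_self _ _⟩
  set M' : ℝ := vals.max' hvalsne with hM'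
  have hM'lt : M' < M := by
    rw [hM']
    rw [Finset.max'_lt_iff]
    intro y hy
    rw [hvals] at hy
    rcases Finset.mem_insert.mp hy with rfl | hy
    · linarith
    · obtain ⟨i, hi, rfl⟩ := Finset.mem_image.mp hy
      have : i ∉ Sfin := (Finset.mem_sdiff.mp hi).2
      rw [hmemS] at this
      push_neg at this
      exact this
  have hM'pos : 0 < M' := lt_of_lt_of_le (by positivity) (vals.le_max' _ (Finset.mem_insert_self _ _))
  have htail : ∀ i, i ∉ Sfin → ‖c i‖ ≤ M' := by
    intro i hi
    by_cases hi2 : M / 2 ≤ ‖c i‖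
    · refine vals.le_max' _ ?_
      rw [hvals]
      refine Finset.mem_insert_of_mem (Finset.mem_image.mpr ⟨i, ?_, rfl⟩)
      exact Finset.mem_sdiff.mpr ⟨by simpa using hi2, hi⟩
    · push_neg at hi2
      exact hi2.le.trans ((vals.le_max' _ (Finset.mem_insert_self _ _)))
  -- Krull intersection: find n such that images of (b i), i ∈ Sfin, are independent mod p^(n+1)
  have hKrull : (⨅ i : ℕ, p ^ i) = ⊥ :=
    Ideal.iInf_pow_eq_bot_of_isDomain (I := p) hp.ne_top
  have hkey : ∀ a : A, a ≠ 0 → ∃ k, a ∉ p ^ k := by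
    intro a ha
    by_contra h
    push_neg at h
    have : a ∈ (⨅ i : ℕ, p ^ i) := Submodule.mem_iInf _ |>.mpr h
    rw [hKrull, Ideal.mem_bot] at this
    exact ha this
  have hbLI : LinearIndependent Fq (fun i : ↥Sfin => b i.1) :=
    b.linearIndependent.comp Subtype.val Subtype.val_injective
  have hN : ∀ g : ↥Sfin → Fq, ∃ k, g ≠ 0 → (∑ i, g i • b i.1) ∉ p ^ k := by
    intro g
    by_cases hg : g = 0
    · exact ⟨0, fun h => absurd hg h⟩
    · have hane : (∑ i, g i • b i.1) ≠ 0 := by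
        intro h0
        apply hg
        funext i
        exact (Fintype.linearIndependent_iff.mp hbLI) g h0 i
      obtain ⟨k, hk⟩ := hkey _ hane
      exact ⟨k, fun _ => hk⟩
  choose N hNspec using hN
  set n : ℕ := Finset.univ.sup N with hn
  -- linear independence of images in the quotient
  set Q := A ⧸ p ^ (n + 1) with hQ
  set mk : A →ₐ[Fq] Q := Ideal.Quotient.mkₐ Fq (p ^ (n + 1)) with hmk
  have hmk_eq : ∀ x : A, Ideal.Quotient.mk (p ^ (n + 1)) x = mk x := fun x => rfl
  set v : ↥Sfin → Q := fun i => mk (b i.1) with hv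
  have hLI : LinearIndependent Fq v := by
    rw [Fintype.linearIndependent_iff]
    intro g hg
    by_contra hgne
    push_neg at hgne
    obtain ⟨i, hgi⟩ := hgne
    have hgne' : g ≠ 0 := fun h => hgi (by rw [h]; rfl)
    have hmem : (∑ i, g i • b i.1) ∈ p ^ (n + 1) := by
      rw [← Ideal.Quotient.eq_zero_iff_mem, hmk_eq, map_sum]
      simpa [map_smul] using hg
    have hle : (p ^ (n + 1) : Ideal A) ≤ p ^ (N g) := by
      apply Ideal.pow_le_pow_right
      have : N g ≤ n := Finset.le_sup (Finset.mem_univ g)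
      omega
    exact hNspec g hgne' (hle hmem)
  -- the dual functional
  set i₁' : ↥Sfin := ⟨i₁, hi₁S⟩ with hi₁'
  set sp := Submodule.span Fq (Set.range v) with hsp
  set f₀ : sp →ₗ[Fq] Fq := (Finsupp.lapply i₁') ∘ₗ hLI.repr with hf₀
  obtain ⟨φ, hφ⟩ := LinearMap.exists_extend f₀
  have hφv : ∀ i : ↥Sfin, φ (v i) = if i = i₁' then 1 else 0 := by
    intro i
    have hmemv : v i ∈ sp := Submodule.subset_span (Set.mem_range_self i)
    have h1 : φ (v i) = f₀ ⟨v i, hmemv⟩ := by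
      rw [← hφ]; rfl
    rw [h1, hf₀]
    simp only [LinearMap.coe_comp, Function.comp_apply, LinearEquiv.coe_coe, Finsupp.lapply_apply]
    rw [hLI.repr_eq_single i ⟨v i, hmemv⟩ rfl]
    rw [Finsupp.single_apply]
  -- the coefficients
  set lam : κ n → Fq := fun j => φ ((b' n) j) with hlam
  set r : ↥Sfin → (κ n →₀ Fq) := fun i => (b' n).repr (v i) with hr
  set J : Finset (κ n) := Finset.univ.biUnion (fun i : ↥Sfin => (r i).support) with hJ
  have hdual : ∀ i : ↥Sfin, (∑ j ∈ J, r i j * lam j) = if i = i₁' then 1 else 0 := by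
    intro i
    rw [← hφv i]
    have hx : v i = ((b' n).repr (v i)).sum fun j a => a • (b' n) j := by
      conv_lhs => rw [← (b' n).linearCombination_repr (v i)]
      rw [Finsupp.linearCombination_apply]
    conv_rhs => rw [hx]
    rw [map_finsuppSum]
    rw [Finsupp.sum_of_support_subset _
      (Finset.subset_biUnion_of_mem (fun i : ↥Sfin => (r i).support) (Finset.mem_univ i)) _
      (by intro j _; simp)]
    simp only [map_smul, smul_eq_mul]
    rfl
  -- analytic part
  set alg : Fq →+* Cinf := algebraMap Fq Cinf with halg
  have halg_le : ∀ t : Fq, ‖alg t‖ ≤ 1 := norm_algebraMap_finite_le_one Fq Cinf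
  set f : κ n → ι → Cinf :=
    fun j i => alg ((b' n).repr (Ideal.Quotient.mk (p ^ (n + 1)) (b i)) j) * c i with hf
  have hfle : ∀ j i, ‖f j i‖ ≤ ‖c i‖ := by
    intro j i
    rw [hf]
    simp only [norm_mul]
    exact mul_le_of_le_one_left (norm_nonneg _) (halg_le _)
  have hsummable : ∀ j, Summable (f j) := fun j => summable_of_coeff_le c hc _ (hfle j)
  -- the finite part of each coordinate sum is small
  have hS_small : ∀ j : κ n, ‖∑ i ∈ Sfin, f j i‖ ≤ M' := by
    intro j
    have hsum1 : Summable ((f j) ∘ ((↑) : (↑Sfin : Set ι) → ι)) := (hsummable j).subtype _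
    have hsum2 : Summable ((f j) ∘ ((↑) : ↑(↑Sfin : Set ι)ᶜ → ι)) := (hsummable j).subtype _
    have hsplit := Summable.tsum_add_tsum_compl (s := (↑Sfin : Set ι)) hsum1 hsum2
    rw [hzero n j] at hsplit
    have hfin : ∑' (x : (↑Sfin : Set ι)), f j x = ∑ i ∈ Sfin, f j i := Finset.tsum_subtype _ _
    rw [hfin] at hsplit
    have heq : ∑ i ∈ Sfin, f j i = - ∑' (x : ↑(↑Sfin : Set ι)ᶜ), f j x :=
      eq_neg_of_add_eq_zero_left hsplit
    rw [heq, norm_neg]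
    refine IsUltrametricDist.norm_tsum_le_of_forall_le_of_nonneg hM'pos.le fun i => ?_
    refine (hfle j i.1).trans (htail i.1 ?_)
    have hi2 := i.2
    simp only [Set.mem_compl_iff, Finset.mem_coe] at hi2
    exact hi2
  -- the key identity
  have hkeyid : (∑ j ∈ J, alg (lam j) * ∑ i ∈ Sfin, f j i) = c i₁ := by
    have hstep : ∀ i ∈ Sfin, (∑ j ∈ J, alg (lam j) * f j i)
        = (if i = i₁ then (1 : Cinf) else 0) * c i := by
      intro i hi
      have h1 : ∀ j, alg (lam j) * f j i = alg (r ⟨i, hi⟩ j * lam j) * c i := by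
        intro j
        rw [hf]
        simp only [map_mul]
        have h2 : ((b' n).repr (Ideal.Quotient.mk (p ^ (n + 1)) (b i)) j) = r ⟨i, hi⟩ j := rfl
        rw [h2]; ring
      rw [Finset.sum_congr rfl (fun j _ => h1 j), ← Finset.sum_mul, ← map_sum, hdual ⟨i, hi⟩]
      simp only [hi₁', Subtype.mk.injEq, apply_ite alg, map_one, map_zero]
    calc ∑ j ∈ J, alg (lam j) * ∑ i ∈ Sfin, f j i
        = ∑ j ∈ J, ∑ i ∈ Sfin, alg (lam j) * f j i := by simp [Finset.mul_sum]
      _ = ∑ i ∈ Sfin, ∑ j ∈ J, alg (lam j) * f j i := Finset.sum_comm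
      _ = ∑ i ∈ Sfin, (if i = i₁ then (1 : Cinf) else 0) * c i := Finset.sum_congr rfl hstep
      _ = c i₁ := by
          rw [Finset.sum_congr rfl (fun i _ => by rw [ite_mul, one_mul, zero_mul])]
          rw [Finset.sum_ite_eq' Sfin i₁ c]
          simp [hi₁S]
  have hfinal : ‖c i₁‖ ≤ M' := by
    rw [← hkeyid]
    refine IsUltrametricDist.norm_sum_le_of_forall_le_of_nonneg hM'pos.le fun j _ => ?_
    rw [norm_mul]
    calc ‖alg (lam j)‖ * ‖∑ i ∈ Sfin, f j i‖ ≤ 1 * M' :=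
          mul_le_mul (halg_le _) (hS_small j) (norm_nonneg _) zero_le_one
      _ = M' := one_mul _
  rw [← hM] at hfinal
  exact absurd (lt_of_le_of_lt hfinal hM'lt) (lt_irrefl M)
end

section
/- With notation as above, an element h of the localization T_(p) of the Tate algebra T at the primes above p is invertible in T_(p) if and only if its evaluation h(p) ∈ (A⊗C∞)/p(A⊗C∞) ≅ F_p ⊗ C∞ is invertible, if and only if its image in the p-adic completion (A⊗C∞)_p is invertible. Consequently the embedding T ↪ (A⊗C∞)_p extends to an embedding T_(p) ↪ (A⊗C∞)_p. -/
open AdicCompletion in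
lemma aux_isUnit_adic {T : Type*} [CommRing T] (a : Ideal T) {s : T}
    (hs : IsUnit (Ideal.Quotient.mk a s)) :
    IsUnit (algebraMap T (AdicCompletion a T) s) := by
  obtain ⟨v, hv⟩ := hs
  obtain ⟨u, hu⟩ := Ideal.Quotient.mk_surjective (↑v⁻¹ : T ⧸ a)
  have hsu : (1 : T) - s * u ∈ a := by
    rw [← Ideal.Quotient.eq_zero_iff_mem]
    rw [map_sub, map_mul, hu, ← hv, map_one]
    simp
  set b : T := 1 - s * u with hb
  have hbmem : b ∈ a := hsu
  set w : ℕ → T := fun n => u * ∑ i ∈ Finset.range n, b ^ i with hw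
  have key : ∀ n, s * w n - 1 ∈ (a ^ n • ⊤ : Ideal T) := by
    intro n
    have : s * w n - 1 = -(b ^ n) := by
      have h1 : s * u = 1 - b := by rw [hb]; ring
      have := mul_geom_sum b n  -- (b - 1) * ∑ = b ^ n - 1
      calc s * w n - 1 = (s * u) * (∑ i ∈ Finset.range n, b ^ i) - 1 := by rw [hw]; ring
        _ = -((b-1) * ∑ i ∈ Finset.range n, b ^ i) - 1 := by rw [h1]; ring
        _ = -(b ^ n - 1) - 1 := by rw [this]
        _ = -(b ^ n) := by ring
    rw [this, smul_eq_mul, Ideal.mul_top]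
    exact neg_mem (Ideal.pow_mem_pow hbmem n)
  have compat : ∀ {m n : ℕ} (hmn : m ≤ n),
      AdicCompletion.transitionMap a T hmn
        (Submodule.Quotient.mk (p := (a ^ n • ⊤ : Submodule T T)) (w n))
        = Submodule.Quotient.mk (p := (a ^ m • ⊤ : Submodule T T)) (w m) := by
    intro m n hmn
    have : AdicCompletion.transitionMap a T hmn
        (Submodule.Quotient.mk (p := (a ^ n • ⊤ : Submodule T T)) (w n))
        = Submodule.Quotient.mk (p := (a ^ m • ⊤ : Submodule T T)) (w n) := rfl
    rw [this, Submodule.Quotient.eq]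
    have : w n - w m = u * ∑ i ∈ Finset.Ico m n, b ^ i := by
      rw [hw]
      dsimp only
      rw [← mul_sub, ← Finset.sum_Ico_eq_sub _ hmn]
    rw [this, smul_eq_mul, Ideal.mul_top]
    refine Ideal.mul_mem_left _ _ (Ideal.sum_mem _ fun i hi => ?_)
    have := Ideal.pow_le_pow_right (I := a) (Finset.mem_Ico.mp hi).1
    exact this (Ideal.pow_mem_pow hbmem i)
  set c : AdicCompletion a T :=
    ⟨fun n => Submodule.Quotient.mk (w n), fun {m n} hmn => compat hmn⟩ with hc
  refine IsUnit.of_mul_eq_one c ?_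
  apply Subtype.ext
  funext n
  show (algebraMap T (AdicCompletion a T) s).val n * Submodule.Quotient.mk (w n) = 1
  have hval : (algebraMap T (AdicCompletion a T) s).val n
      = Submodule.Quotient.mk (p := (a ^ n • ⊤ : Submodule T T)) s := rfl
  rw [hval]
  have : (Submodule.Quotient.mk (p := (a ^ n • ⊤ : Submodule T T)) s) *
      Submodule.Quotient.mk (w n) = Submodule.Quotient.mk (s * w n) := rfl
  rw [this]
  have h1 : (1 : T ⧸ (a ^ n • ⊤ : Ideal T)) = Submodule.Quotient.mk 1 := rfl
  rw [h1, Submodule.Quotient.eq]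
  exact key n

set_option maxHeartbeats 1000000
set_option synthInstance.maxHeartbeats 100000

/-- **Invertibility in `T_(p)`, modulo `p`, and in the `p`-adic completion.**
Let `T` be a Dedekind domain (the Tate algebra `T = A ⊗̂ C∞` is one) and `a` a nonzero
proper ideal of `T` (the extension `pT` of the prime `p ⊆ A`).  Let `S = T_(a)` be the
intersection, inside the fraction field of `T`, of the localizations of `T` at the primes
`q` dividing `a`, let `r : S → T/a` be the residue ("evaluation at `p`") map extending
`T → T/a`, and let the `a`-adic completion of `T` be `AdicCompletion a T`.
Then an element `h ∈ S` is invertible in `S` if and only if its evaluation `r h = h(p)` is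
invertible, if and only if its image in the `a`-adic completion is invertible; and
consequently the embedding `T ↪ (A ⊗ C∞)_p` extends to an embedding
`ψ : T_(p) ↪ (A ⊗ C∞)_p`. -/
theorem localized_tate_algebra_units_and_embedding
    (T : Type*) [CommRing T] [IsDomain T] [IsDedekindDomain T]
    (a : Ideal T) (ha0 : a ≠ ⊥) (ha1 : a ≠ ⊤)
    (S : Subring (FractionRing T))
    (hS : (S : Set (FractionRing T)) =
      {x : FractionRing T | ∀ q : Ideal T, q.IsPrime → a ≤ q →
        ∃ t s : T, s ∉ q ∧
          x * algebraMap T (FractionRing T) s = algebraMap T (FractionRing T) t})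
    (r : ↥S →+* T ⧸ a)
    (hr : ∀ (t : T) (x : ↥S),
      (x : FractionRing T) = algebraMap T (FractionRing T) t → r x = Ideal.Quotient.mk a t) :
    (∀ h : ↥S, IsUnit h ↔ IsUnit (r h)) ∧
    ∃ ψ : ↥S →+* AdicCompletion a T,
      Function.Injective ψ ∧
      (∀ (t : T) (x : ↥S),
        (x : FractionRing T) = algebraMap T (FractionRing T) t →
          ψ x = algebraMap T (AdicCompletion a T) t) ∧
      (∀ h : ↥S, IsUnit h ↔ IsUnit (ψ h)) := by
  have halg : ∀ t : T, algebraMap T (FractionRing T) t ∈ S := by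
    intro t
    rw [← SetLike.mem_coe, hS]
    intro q hq haq
    exact ⟨t, 1, fun h => hq.ne_top (q.eq_top_of_isUnit_mem h isUnit_one), by simp⟩
  have hinj : Function.Injective (algebraMap T (FractionRing T)) :=
    IsFractionRing.injective T (FractionRing T)
  have hnontriv : Nontrivial (T ⧸ a) := Ideal.Quotient.nontrivial_iff.mpr ha1
  -- part 1
  have part1 : ∀ h : ↥S, IsUnit h ↔ IsUnit (r h) := by
    intro h
    constructor
    · exact fun hu => hu.map r
    · intro hu
      have hne : (h : FractionRing T) ≠ 0 := by
        intro h0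
        have : h = 0 := Subtype.ext h0
        rw [this, map_zero] at hu
        exact not_isUnit_zero hu
      -- the inverse lies in S
      have hxmem : (h : FractionRing T)⁻¹ ∈ S := by
        rw [← SetLike.mem_coe, hS]
        intro q hq haq
        have hmem := h.2
        rw [← SetLike.mem_coe, hS] at hmem
        obtain ⟨t, s, hs, hts⟩ := hmem q hq haq
        have htq : t ∉ q := by
          intro htq
          have hqmax : q.IsMaximal := (Ideal.IsPrime.isMaximal hq (fun hbot => ha0 (le_bot_iff.mp (hbot ▸ haq))))
          haveI : q.IsMaximal := hqmax
          have hrs : r h * Ideal.Quotient.mk a s = Ideal.Quotient.mk a t := by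
            have hsS : (⟨algebraMap T (FractionRing T) s, halg s⟩ : ↥S) = _ := rfl
            have h1 : r ⟨algebraMap T (FractionRing T) s, halg s⟩ = Ideal.Quotient.mk a s :=
              hr s _ rfl
            have h2 : r (h * ⟨algebraMap T (FractionRing T) s, halg s⟩) = Ideal.Quotient.mk a t := by
              apply hr
              exact hts
            rw [map_mul, h1] at h2
            exact h2
          have := congrArg (Ideal.Quotient.factor haq) hrs
          rw [map_mul, Ideal.Quotient.factor_mk, Ideal.Quotient.factor_mk] at this
          rw [Ideal.Quotient.eq_zero_iff_mem.mpr htq] at this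
          have hsne : Ideal.Quotient.mk q s ≠ 0 := fun h0 => hs (Ideal.Quotient.eq_zero_iff_mem.mp h0)
          have hru : IsUnit (Ideal.Quotient.factor haq (r h)) := hu.map _
          exact hsne ((hru.mul_right_eq_zero).mp this)
        refine ⟨s, t, htq, ?_⟩
        have htne : algebraMap T (FractionRing T) t ≠ 0 := by
          rw [← hts]
          exact mul_ne_zero hne (fun h0 => hs (by
            rw [show s = (0:T) from hinj (by rw [h0, map_zero])]; exact q.zero_mem))
        field_simp
        rw [← hts, mul_comm]
      refine IsUnit.of_mul_eq_one (a := h) ⟨_, hxmem⟩ (Subtype.ext ?_)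
      exact mul_inv_cancel₀ hne
  refine ⟨part1, ?_⟩
  classical
  -- the canonical map T → S
  let f : T →+* ↥S :=
  { toFun := fun t => ⟨algebraMap T (FractionRing T) t, halg t⟩
    map_one' := Subtype.ext (by simp)
    map_mul' := fun x y => Subtype.ext (by simp)
    map_zero' := Subtype.ext (by simp)
    map_add' := fun x y => Subtype.ext (by simp) }
  letI : Algebra T ↥S := f.toAlgebra
  have halgS : ∀ t : T, algebraMap T ↥S t = f t := fun _ => rfl
  -- the submonoid of elements invertible mod a
  let M : Submonoid T :=
  { carrier := {s | IsUnit (Ideal.Quotient.mk a s)}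
    mul_mem' := fun {s1 s2} h1 h2 => by
      simpa only [Set.mem_setOf_eq, map_mul] using h1.mul h2
    one_mem' := by simp }
  -- denominator lemma
  have hden : ∀ x : ↥S, ∃ t s : T, IsUnit (Ideal.Quotient.mk a s) ∧
      (x : FractionRing T) * algebraMap T (FractionRing T) s
        = algebraMap T (FractionRing T) t := by
    intro x
    let D : Ideal T :=
    { carrier := {s | ∃ t, (x : FractionRing T) * algebraMap T (FractionRing T) s
        = algebraMap T (FractionRing T) t}
      add_mem' := fun {s1 s2} h1 h2 => by
        obtain ⟨t1, h1⟩ := h1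
        obtain ⟨t2, h2⟩ := h2
        exact ⟨t1 + t2, by rw [map_add, map_add, mul_add, h1, h2]⟩
      zero_mem' := ⟨0, by simp⟩
      smul_mem' := fun c s hcs => by
        obtain ⟨t, h⟩ := hcs
        exact ⟨c * t, by rw [smul_eq_mul, map_mul, map_mul, mul_left_comm, h]⟩ }
    have hsup : D ⊔ a = ⊤ := by
      by_contra hne
      obtain ⟨m, hm, hle⟩ := Ideal.exists_le_maximal _ hne
      have hx2 := x.2
      rw [← SetLike.mem_coe, hS] at hx2
      obtain ⟨t, s, hs, hts⟩ := hx2 m hm.isPrime (le_trans le_sup_right hle)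
      exact hs (hle ((le_sup_left : D ≤ D ⊔ a) (⟨t, hts⟩ : s ∈ D)))
    obtain ⟨d, hd, b, hb, hdb⟩ := Submodule.mem_sup.mp
      (hsup ▸ Submodule.mem_top : (1 : T) ∈ D ⊔ a)
    obtain ⟨t, ht⟩ := hd
    refine ⟨t, d, ?_, ht⟩
    have hd1 : Ideal.Quotient.mk a d = 1 := by
      rw [← map_one (Ideal.Quotient.mk a), ← hdb, map_add,
        Ideal.Quotient.eq_zero_iff_mem.mpr hb, add_zero]
    rw [hd1]; exact isUnit_one
  haveI hloc : IsLocalization M ↥S :=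
  { map_units := fun y => by
      rw [halgS, part1, hr y.1 (f y.1) rfl]
      exact y.2
    surj := fun x => by
      obtain ⟨t, s, hs, hts⟩ := hden x
      exact ⟨(t, ⟨s, hs⟩), Subtype.ext hts⟩
    exists_of_eq := fun {t1 t2} h => by
      refine ⟨1, ?_⟩
      have := congrArg (Subtype.val) h
      simpa using hinj this }
  have hg : ∀ y : M, IsUnit (algebraMap T (AdicCompletion a T) y) :=
    fun y => aux_isUnit_adic a y.2
  set ψ : ↥S →+* AdicCompletion a T := IsLocalization.lift hg with hψ
  have hψf : ∀ t : T, ψ (f t) = algebraMap T (AdicCompletion a T) t := by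
    intro t
    rw [← halgS]
    exact IsLocalization.lift_eq hg t
  have hext : ∀ (t : T) (x : ↥S),
      (x : FractionRing T) = algebraMap T (FractionRing T) t →
        ψ x = algebraMap T (AdicCompletion a T) t := by
    intro t x hx
    have : x = f t := Subtype.ext hx
    rw [this, hψf]
  -- the map to T/a through the completion
  let θ : AdicCompletion a T →+* T ⧸ a :=
    (Ideal.quotEquivOfEq (pow_one a)).toRingHom.comp (AdicCompletion.evalₐ a 1).toRingHom
  have hθ : ∀ t : T, θ (algebraMap T (AdicCompletion a T) t) = Ideal.Quotient.mk a t := by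
    intro t
    show (Ideal.quotEquivOfEq (pow_one a))
      ((AdicCompletion.evalₐ a 1) (algebraMap T (AdicCompletion a T) t)) = _
    rw [AlgHom.commutes, Ideal.Quotient.algebraMap_eq, Ideal.quotEquivOfEq_mk]
  have hrθ : ∀ h : ↥S, r h = θ (ψ h) := by
    intro h
    obtain ⟨t, s, hs, hts⟩ := hden h
    have h1 : r h * Ideal.Quotient.mk a s = Ideal.Quotient.mk a t := by
      have := hr t (h * f s) hts
      rwa [map_mul, hr s (f s) rfl] at this
    have h2 : θ (ψ h) * Ideal.Quotient.mk a s = Ideal.Quotient.mk a t := by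
      have : ψ (h * f s) = ψ (f t) := by
        congr 1
        exact Subtype.ext hts
      rw [map_mul, hψf, hψf] at this
      have := congrArg θ this
      rwa [map_mul, hθ, hθ] at this
    rw [← h2] at h1
    exact hs.mul_right_cancel h1
  refine ⟨ψ, ?_, hext, ?_⟩
  · -- injectivity
    refine (injective_iff_map_eq_zero ψ).mpr ?_
    intro x hx
    obtain ⟨t, s, hs, hts⟩ := hden x
    have h1 : ψ (x * f s) = ψ (f t) := by congr 1; exact Subtype.ext hts
    rw [map_mul, hψf, hx, zero_mul] at h1
    -- algebraMap T (AdicCompletion a T) t = 0, so t ∈ ⨅ aⁿ = ⊥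
    have ht0 : t = 0 := by
      have hmem : ∀ n : ℕ, t ∈ a ^ n := by
        intro n
        have := congrArg (AdicCompletion.evalₐ a n) h1.symm
        rw [hψf, map_zero, AlgHom.commutes, Ideal.Quotient.algebraMap_eq] at this
        exact Ideal.Quotient.eq_zero_iff_mem.mp this
      have := Ideal.iInf_pow_eq_bot_of_isDomain a ha1
      have : t ∈ (⊥ : Ideal T) := this ▸ Submodule.mem_iInf _ |>.mpr hmem
      simpa using this
    have hs0 : algebraMap T (FractionRing T) s ≠ 0 := by
      intro h0
      have : s = 0 := hinj (by rw [h0, map_zero])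
      rw [this, map_zero] at hs
      exact not_isUnit_zero hs
    apply Subtype.ext
    have : (x : FractionRing T) * algebraMap T (FractionRing T) s = 0 := by
      rw [hts, ht0, map_zero]
    simpa [hs0] using this
  · -- units
    intro h
    constructor
    · exact fun hu => hu.map ψ
    · intro hu
      rw [part1, hrθ]
      exact hu.map θ
end
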